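/- Let A be an abelian category and X a subcategory. The KE-closure of X (smallest subcategory containing X closed under kernels and extensions) equals F_2(X), the 2-fold torsion-free closure of X, defined as the smallest torsion-free class of F_1(X) containing X, where F_1(X) is the smallest torsion-free class of A containing X. -/
import Mathlib


open CategoryTheory CategoryTheory.Limits

universe w v u

namespace Paper

variable {C : Type u} [Category.{v} C] [Abelian C]

/-- A predicate on objects is closed under isomorphisms. -/
def IsoClosedP (P : C → Prop) : Prop := ∀ ⦃A B : C⦄, (A ≅ B) → P A → P B

/-- `P` is closed under extensions in the ambient abelian category. -/
def ClosedUnderExtensions (P : C → Prop) : Prop :=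
  ∀ (S : ShortComplex C), S.ShortExact → P S.X₁ → P S.X₃ → P S.X₂

/-- `P ⊆ E` is closed under conflations in `E` (short exact sequences all of whose
terms belong to `E`). -/
def ClosedUnderConflations (E P : C → Prop) : Prop :=
  ∀ (S : ShortComplex C), S.ShortExact → E S.X₁ → E S.X₂ → E S.X₃ →
    P S.X₁ → P S.X₃ → P S.X₂

/-- `P` is closed under admissible subobjects in `E`. -/
def ClosedUnderAdmissibleSubobjects (E P : C → Prop) : Prop :=
  ∀ (S : ShortComplex C), S.ShortExact → E S.X₁ → E S.X₂ → E S.X₃ →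
    P S.X₂ → P S.X₁

/-- `P` is closed under admissible quotients in `E`. -/
def ClosedUnderAdmissibleQuotients (E P : C → Prop) : Prop :=
  ∀ (S : ShortComplex C), S.ShortExact → E S.X₁ → E S.X₂ → E S.X₃ →
    P S.X₂ → P S.X₃

/-- `P` is a torsion-free class of the extension-closed subcategory `E`. -/
def IsTorsionFreeClassOf (E P : C → Prop) : Prop :=
  IsoClosedP P ∧ (∀ M, P M → E M) ∧ ClosedUnderConflations E P ∧
    ClosedUnderAdmissibleSubobjects E P

/-- `P` is a torsion class of the extension-closed subcategory `E`. -/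
def IsTorsionClassOf (E P : C → Prop) : Prop :=
  IsoClosedP P ∧ (∀ M, P M → E M) ∧ ClosedUnderConflations E P ∧
    ClosedUnderAdmissibleQuotients E P

/-- `F` is the smallest torsion-free class of `E` containing `X`. -/
def IsSmallestTorsionFreeClassOf (E X F : C → Prop) : Prop :=
  IsTorsionFreeClassOf E F ∧ (∀ M, X M → F M) ∧
    ∀ G, IsTorsionFreeClassOf E G → (∀ M, X M → G M) → ∀ M, F M → G M

/-- `F` is the smallest torsion class of `E` containing `X`. -/
def IsSmallestTorsionClassOf (E X F : C → Prop) : Prop :=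
  IsTorsionClassOf E F ∧ (∀ M, X M → F M) ∧
    ∀ G, IsTorsionClassOf E G → (∀ M, X M → G M) → ∀ M, F M → G M

/-- `X` is an `n`-fold torsion-free class of the ambient subcategory `Amb`. -/
def IsNFoldTorsionFreeClass (Amb X : C → Prop) (n : ℕ) : Prop :=
  ∃ F : ℕ → (C → Prop), F 0 = Amb ∧ F n = X ∧
    ∀ i, i < n → IsTorsionFreeClassOf (F i) (F (i+1))

/-- `X` is an `n`-fold torsion class of the ambient subcategory `Amb`. -/
def IsNFoldTorsionClass (Amb X : C → Prop) (n : ℕ) : Prop :=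
  ∃ T : ℕ → (C → Prop), T 0 = Amb ∧ T n = X ∧
    ∀ i, i < n → IsTorsionClassOf (T i) (T (i+1))

/-- `X` is closed under `m`-kernels: for every exact sequence
`0 → M → X^0 → ⋯ → X^m` with all `X^i ∈ X` we have `M ∈ X`. -/
def ClosedUnderNKernels (X : C → Prop) (m : ℕ) : Prop :=
  ∀ (F : ComposableArrows C (m+1)), F.Exact →
    Mono (F.map' 0 1 (by omega) (by omega)) →
    (∀ (i : ℕ) (hi : i ≤ m), X (F.obj ⟨i+1, by omega⟩)) →
    X (F.obj ⟨0, by omega⟩)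

/-- `M` has `X`-resolution dimension at most `j`: there is an exact sequence
`0 → X_j → ⋯ → X_0 → M → 0` with all `X_i ∈ X`. -/
def ResDimLE (X : C → Prop) (j : ℕ) (M : C) : Prop :=
  ∃ F : ComposableArrows C (j+1), F.Exact ∧
    Mono (F.map' 0 1 (by omega) (by omega)) ∧
    Epi (F.map' j (j+1) (by omega) (by omega)) ∧
    (∀ (i : ℕ) (hi : i ≤ j), X (F.obj ⟨i, by omega⟩)) ∧
    F.obj ⟨j+1, by omega⟩ = M


/-- A torsion-free class of the ambient abelian category:
closed under isomorphisms, subobjects and extensions. -/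
def AbsTorsionFreeClass (P : C → Prop) : Prop :=
  IsoClosedP P ∧ (∀ ⦃A B : C⦄ (i : A ⟶ B), Mono i → P B → P A) ∧
    ClosedUnderExtensions P

/-- `P` is KE-closed: closed under isomorphisms, kernels and extensions. -/
def KEClosed (P : C → Prop) : Prop :=
  IsoClosedP P ∧ (∀ ⦃A B : C⦄ (f : A ⟶ B), P A → P B → P (kernel f)) ∧
    ClosedUnderExtensions P

/-- The inductive closure of `X` under isomorphisms, subobjects and extensions. -/
inductive Gen (X : C → Prop) : C → Prop
  | of_mem {M : C} (h : X M) : Gen X M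
  | of_iso {A B : C} (e : A ≅ B) (h : Gen X A) : Gen X B
  | of_mono {A B : C} (i : A ⟶ B) (hi : Mono i) (h : Gen X B) : Gen X A
  | of_ext (S : ShortComplex C) (hS : S.ShortExact) (h1 : Gen X S.X₁)
      (h3 : Gen X S.X₃) : Gen X S.X₂

lemma gen_absTFC (X : C → Prop) : AbsTorsionFreeClass (Gen X) :=
  ⟨fun _ _ e h => .of_iso e h, fun _ _ i hi h => .of_mono i hi h,
    fun S hS h1 h3 => .of_ext S hS h1 h3⟩

/-- Key lemma: if `M` is in the closure of `X` under isos, subobjects and extensions,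
then any KE-closed class `G` containing `X` contains the kernel of any morphism from an
object of `G` to `M`. -/
lemma gen_key {X : C → Prop} {M : C} (hM : Gen X M) :
    ∀ (G : C → Prop), KEClosed G → (∀ N, X N → G N) →
      ∀ (B : C) (f : B ⟶ M), G B → G (kernel f) := by
  induction hM with
  | of_mem h =>
    intro G hG hXG B f hB
    exact hG.2.1 f hB (hXG _ h)
  | of_iso e _ ih =>
    intro G hG hXG B f hB
    exact hG.1 (kernelCompMono f e.inv) (ih G hG hXG B (f ≫ e.inv) hB)
  | of_mono i hi _ ih =>
    intro G hG hXG B f hB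
    haveI := hi
    exact hG.1 (kernelCompMono f i) (ih G hG hXG B (f ≫ i) hB)
  | of_ext S hS _ _ ih1 ih3 =>
    intro G hG hXG B f hB
    haveI := hS.mono_f
    -- first take the kernel of the composite to `S.X₃`
    have hker : G (kernel (f ≫ S.g)) := ih3 G hG hXG B (f ≫ S.g) hB
    -- the restriction of `f` to this kernel factors through `S.X₁`
    have hk0 : (kernel.ι (f ≫ S.g) ≫ f) ≫ S.g = 0 := by
      rw [Category.assoc, kernel.condition]
    set f' : kernel (f ≫ S.g) ⟶ S.X₁ := hS.exact.lift (kernel.ι (f ≫ S.g) ≫ f) hk0 with hf'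
    have hf'f : f' ≫ S.f = kernel.ι (f ≫ S.g) ≫ f := hS.exact.lift_f _ _
    have hker' : G (kernel f') := ih1 G hG hXG _ f' hker
    -- `kernel f ≅ kernel f'`
    have hu0 : kernel.ι f ≫ f ≫ S.g = 0 := by rw [← Category.assoc, kernel.condition, zero_comp]
    set u : kernel f ⟶ kernel (f ≫ S.g) := kernel.lift _ (kernel.ι f) hu0 with hu
    have huι : u ≫ kernel.ι (f ≫ S.g) = kernel.ι f := kernel.lift_ι _ _ _
    have huf' : u ≫ f' = 0 := by
      rw [← cancel_mono S.f, Category.assoc, hf'f, ← Category.assoc, huι,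
        kernel.condition, zero_comp]
    have hlim : IsLimit (KernelFork.ofι u huf') := by
      refine KernelFork.IsLimit.ofι u huf' (fun {T} t ht => kernel.lift f
        (t ≫ kernel.ι (f ≫ S.g)) ?_) (fun {T} t ht => ?_) (fun {T} t ht m hm => ?_)
      · have : (t ≫ kernel.ι (f ≫ S.g)) ≫ f = t ≫ f' ≫ S.f := by
          rw [hf'f, Category.assoc]
        rw [this, ← Category.assoc, ht, zero_comp]
      · have hmono : Mono (kernel.ι (f ≫ S.g)) := inferInstance
        rw [← cancel_mono (kernel.ι (f ≫ S.g)), Category.assoc, huι, kernel.lift_ι]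
      · rw [← cancel_mono (kernel.ι f), kernel.lift_ι, ← huι, ← Category.assoc, hm]
    have hiso : kernel f' ≅ kernel f :=
      IsLimit.conePointUniqueUpToIso (kernelIsKernel f') hlim
    exact hG.1 hiso hker'

/-- The short complex `kernel f → A → coimage f` is short exact. -/
lemma ker_shortExact {A B : C} (f : A ⟶ B) :
    (ShortComplex.mk (kernel.ι f) (cokernel.π (kernel.ι f))
      (cokernel.condition _)).ShortExact :=
  { exact := ShortComplex.exact_of_g_is_cokernel _ (cokernelIsCokernel _) }

theorem statement10 (X F₁ F₂ : C → Prop)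
    (hF₁ : AbsTorsionFreeClass F₁ ∧ (∀ M, X M → F₁ M) ∧
      ∀ G, AbsTorsionFreeClass G → (∀ M, X M → G M) → ∀ M, F₁ M → G M)
    (hF₂ : IsSmallestTorsionFreeClassOf F₁ X F₂) :
    ∀ M : C, (∀ G, KEClosed G → (∀ N, X N → G N) → G M) ↔ F₂ M := by
  obtain ⟨⟨hF₁iso, hF₁sub, hF₁ext⟩, hXF₁, hF₁min⟩ := hF₁
  obtain ⟨⟨hF₂iso, hF₂F₁, hF₂conf, hF₂adm⟩, hXF₂, hF₂min⟩ := hF₂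
  -- `F₂` is KE-closed
  have hF₂KE : KEClosed F₂ := by
    refine ⟨hF₂iso, fun A B f hA hB => ?_, fun S hS h1 h3 => ?_⟩
    · -- kernels
      have hAF₁ : F₁ A := hF₂F₁ _ hA
      have hkerF₁ : F₁ (kernel f) := hF₁sub (kernel.ι f) inferInstance hAF₁
      have hcoimF₁ : F₁ (cokernel (kernel.ι f)) :=
        hF₁sub (Abelian.factorThruCoimage f) inferInstance (hF₂F₁ _ hB)
      exact hF₂adm _ (ker_shortExact f) hkerF₁ hAF₁ hcoimF₁ hA
    · -- extensions
      exact hF₂conf S hS (hF₂F₁ _ h1) (hF₁ext S hS (hF₂F₁ _ h1) (hF₂F₁ _ h3)) (hF₂F₁ _ h3) h1 h3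
  -- the intersection of all KE-closed classes containing `X`
  set K : C → Prop := fun M => ∀ G, KEClosed G → (∀ N, X N → G N) → G M with hK
  -- `F₁` is KE-closed, so `K ⊆ F₁`
  have hF₁KE : KEClosed F₁ :=
    ⟨hF₁iso, fun A B f hA _ => hF₁sub (kernel.ι f) inferInstance hA, hF₁ext⟩
  have hKF₁ : ∀ M, K M → F₁ M := fun M hM => hM F₁ hF₁KE hXF₁
  -- every object of `F₁` lies in the inductive closure `Gen X`
  have hF₁Gen : ∀ M, F₁ M → Gen X M :=
    hF₁min (Gen X) (gen_absTFC X) (fun M hM => .of_mem hM)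
  -- `K` is a torsion-free class of `F₁`
  have hKtf : IsTorsionFreeClassOf F₁ K := by
    refine ⟨fun A B e hA G hG hXG => hG.1 e (hA G hG hXG), hKF₁,
      fun S hS _ _ _ h1 h3 G hG hXG => hG.2.2 S hS (h1 G hG hXG) (h3 G hG hXG),
      fun S hS e1 e2 e3 h2 G hG hXG => ?_⟩
    haveI := hS.mono_f
    have hker : G (kernel S.g) := gen_key (hF₁Gen _ e3) G hG hXG S.X₂ S.g (h2 G hG hXG)
    exact hG.1 (IsLimit.conePointUniqueUpToIso hS.exact.fIsKernel (kernelIsKernel S.g)).symm hker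
  intro M
  constructor
  · intro h
    exact h F₂ hF₂KE hXF₂
  · intro hM G hG hXG
    exact hF₂min K hKtf (fun N hN G hG hXG => hXG N hN) M hM G hG hXG

end Paper
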